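/- In the weighted STV construction (W-votes p ≻ a ≻ b summing to 4K, vote a ≻ p ≻ b of weight 3K−1, vote b ≻ a ≻ p of weight 2K, tie-breaking a ≻ b ≻ p), if the changed W-votes placing b first have total weight strictly greater than K, then p is eliminated in the first round and cannot win. -/

import Mathlib

/-- The three candidates. -/
inductive Cand : Type
  | p | a | b
deriving DecidableEq

open Cand

/-- Weighted plurality score: total weight of the votes ranking `x` first. -/
def plScore (E : Multiset (ℕ × List Cand)) (x : Cand) : ℕ :=
  (E.map fun v => if v.2.head? = some x then v.1 else 0).sum

/-- Weighted pairwise margin `D(x,y)`. -/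
def marg (E : Multiset (ℕ × List Cand)) (x y : Cand) : ℤ :=
  (E.map fun v => if v.2.idxOf x < v.2.idxOf y then (v.1 : ℤ) else -(v.1 : ℤ)).sum

/-- Tie-breaking order `a ≻ b ≻ p`. -/
def prioABP : Cand → ℕ
  | Cand.a => 0
  | Cand.b => 1
  | Cand.p => 2

/-- `e` is eliminated in the first STV round: `e` has the lowest plurality score,
ties broken by the tie-breaking order (the less preferred candidate is eliminated). -/
def eliminatedFirst (E : Multiset (ℕ × List Cand)) (prio : Cand → ℕ) (e : Cand) : Prop :=
  ∀ y, y ≠ e → plScore E e < plScore E y ∨ (plScore E e = plScore E y ∧ prio y < prio e)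

/-- `x` beats `y` in the weighted pairwise contest, ties broken by the tie-breaking order. -/
def pairBeats (E : Multiset (ℕ × List Cand)) (prio : Cand → ℕ) (x y : Cand) : Prop :=
  0 < marg E x y ∨ (marg E x y = 0 ∧ prio x < prio y)

/-- STV winner for three candidates: some candidate `e` is eliminated first, and `x`
wins the pairwise contest against the other remaining candidate (vote transfers preserve
the pairwise comparison between the two remaining candidates). -/
def stvWins (E : Multiset (ℕ × List Cand)) (prio : Cand → ℕ) (x : Cand) : Prop :=
  ∃ e, eliminatedFirst E prio e ∧ x ≠ e ∧ ∀ y, y ≠ e → y ≠ x → pairBeats E prio x y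

lemma plScore_eq_sum_filter (E : Multiset (ℕ × List Cand)) (x : Cand) :
    plScore E x = ((E.filter fun v => v.2.head? = some x).map Prod.fst).sum := by
  induction E using Multiset.induction with
  | empty => rfl
  | cons v E ih =>
    by_cases h : v.2.head? = some x <;> simp_all [plScore]

lemma plScore_eq_zero {E : Multiset (ℕ × List Cand)} {x : Cand}
    (h : ∀ v ∈ E, v.2.head? ≠ some x) : plScore E x = 0 := by
  rw [plScore_eq_sum_filter, Multiset.filter_eq_nil.mpr h]
  rfl

lemma plScore_add_plScore {E : Multiset (ℕ × List Cand)} {x y : Cand} (hxy : x ≠ y)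
    (h : ∀ v ∈ E, v.2.head? = some x ∨ v.2.head? = some y) :
    plScore E x + plScore E y = (E.map Prod.fst).sum := by
  induction E using Multiset.induction with
  | empty => rfl
  | cons v E ih =>
    have ih := ih fun u hu => h u (Multiset.mem_cons_of_mem hu)
    rcases h v (Multiset.mem_cons_self _ _) with hv | hv <;>
      simp [plScore] at ih ⊢ <;> simp [hv, hxy, hxy.symm] <;> omega

lemma List.head?_ne_of_idxOf_lt {α : Type*} [DecidableEq α] {l : List α} {x y : α}
    (h : l.idxOf x < l.idxOf y) : l.head? ≠ some y := by
  intro hy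
  cases l with
  | nil => simp at hy
  | cons z t => obtain rfl := Option.some.inj hy; simp at h

lemma head?_eq_p_or_b {l : List Cand} (hperm : l.Perm [p, a, b])
    (hpa : l.idxOf p < l.idxOf a) : l.head? = some p ∨ l.head? = some b := by
  obtain ⟨x, t, rfl⟩ : ∃ x t, l = x :: t := List.exists_cons_of_length_pos (by simp [hperm.length_eq])
  have hx : x ∈ [p, a, b] := hperm.subset List.mem_cons_self
  have hxa := List.head?_ne_of_idxOf_lt hpa
  simp only [List.mem_cons, List.not_mem_nil, or_false] at hx
  rcases hx with rfl | rfl | rfl <;> simp_all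

lemma not_stvWins_of_eliminatedFirst {E : Multiset (ℕ × List Cand)} {prio : Cand → ℕ} {x : Cand}
    (hx : eliminatedFirst E prio x) : ¬ stvWins E prio x := by
  rintro ⟨e, he, hxe, -⟩
  rcases he x hxe with h | ⟨h, h'⟩ <;> rcases hx e (Ne.symm hxe) with g | ⟨g, g'⟩ <;> omega

theorem stmt_8_general (K : ℕ) (W : Multiset ℕ)
    (hsum : W.sum = 4 * K)
    (V : Multiset (ℕ × List Cand)) (hV : V.map Prod.fst = W)
    (hrank : ∀ v ∈ V, v.2.Perm [p, a, b] ∧ v.2.idxOf p < v.2.idxOf a)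
    (ht : K < ((V.filter fun v => v.2.head? = some b).map Prod.fst).sum) :
    eliminatedFirst (V + {(3 * K - 1, [a, p, b]), (2 * K, [b, a, p])}) prioABP p ∧
      ¬ stvWins (V + {(3 * K - 1, [a, p, b]), (2 * K, [b, a, p])}) prioABP p := by
  have hV_a : plScore V a = 0 := plScore_eq_zero fun v hv =>
    List.head?_ne_of_idxOf_lt (hrank v hv).2
  have hV_pb : plScore V p + plScore V b = 4 * K := by
    rw [plScore_add_plScore (by decide) fun v hv => head?_eq_p_or_b (hrank v hv).1 (hrank v hv).2,
      hV, hsum]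
  rw [← plScore_eq_sum_filter] at ht
  -- With `t > K` votes for `b`, `p` scores `4K - t ≤ 3K - 1` (the score of `a`, which wins
  -- ties against `p`) and `4K - t < 2K + t` (the score of `b`).
  have helim : eliminatedFirst (V + {(3 * K - 1, [a, p, b]), (2 * K, [b, a, p])}) prioABP p := by
    rintro (_ | _ | _) hy <;> simp [plScore, prioABP] at hy hV_a hV_pb ht ⊢ <;> omega
  exact ⟨helim, not_stvWins_of_eliminatedFirst helim⟩

/-- In the weighted STV construction, if the changed `W`-votes placing `b` first have
total weight strictly greater than `K`, then `p` is eliminated in the first round and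
cannot win. -/
theorem stmt_8 (K : ℕ) (hK : 0 < K) (W : Multiset ℕ)
    (hpos : ∀ w ∈ W, 0 < w) (hsum : W.sum = 4 * K)
    (V : Multiset (ℕ × List Cand)) (hV : V.map Prod.fst = W)
    (hrank : ∀ v ∈ V, v.2.Perm [p, a, b] ∧ v.2.idxOf p < v.2.idxOf a)
    (ht : K < ((V.filter fun v => v.2.head? = some b).map Prod.fst).sum) :
    eliminatedFirst (V + {(3 * K - 1, [a, p, b]), (2 * K, [b, a, p])}) prioABP p ∧
      ¬ stvWins (V + {(3 * K - 1, [a, p, b]), (2 * K, [b, a, p])}) prioABP p :=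
  stmt_8_general K W hsum V hV hrank ht
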